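/- arXiv:1105.4054 — 2 statements merged into one kernel-verified Lean document; each statement's English description precedes it below -/
import Mathlib

section
/- Let n ≥ 4 be even. On ℝ²ⁿ with coordinates (X₁,...,Xₙ,u₁,...,uₙ) define I₃ = Σ_{1 ≤ i₁ < i₂ < i₃ ≤ n} u_{i₁} u_{i₂} u_{i₃} − Σ_{1 ≤ i,j ≤ n, j ≢ i (mod n), j ≢ i−1 (mod n)} u_i X_j, where X₀ := Xₙ. Then ∇I₃(X,u) = 0 if and only if there exist X₁, X₂, u₁, u₂ ∈ ℝ with u₁ + u₂ = 0 and X₁ + X₂ = u₁u₂ such that X_i = X₁ for all odd i, X_i = X₂ for all even i, u_i = u₁ for all odd i, and u_i = u₂ for all even i. -/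
/-!
`I₃` has degree at most one in each single variable, so its partial derivatives are the slopes
of its (affine) restrictions to coordinate lines. Since `Σ_{j ≠ i, i-1} X_j = Y - X_i - X_{i-1}`,
`I₃ = e₃(u) - U Y + Σ_i u_i (X_i + X_{i-1})`, from which `∂I₃/∂X_k = u_k + u_{k+1} - U` and
`∂I₃/∂u_k = e₂(u) - u_k (U - u_k) - (Y - X_{k-1} - X_k)` are read off.

If `∂I₃/∂X_k = 0` for all `k`, the adjacent sums `u_k + u_{k+1}` all equal `U`; summing them
around the cycle gives `2U = nU`, so `U = 0` and `u = (a, -a, a, -a, …)`. Then `u_k² = a²` and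
`2 e₂(u) = U² - Σ u_k² = -n a²`, so `∂I₃/∂u_k = 0` makes the adjacent sums of `X` equal to a
constant `c`, and summing around the cycle once more gives `(n - 2)(c + a²) = 0`, i.e.
`c = -a² = u₁ u₂`. For even `n` the converse is a direct substitution.
-/

/-- The conserved quantity `I₃` of the periodic Toda lattice, in the variables
`(X₁,…,Xₙ,u₁,…,uₙ)` (indices of `X` and `u` taken modulo `n`). -/
noncomputable def todaPeriodicI3 (n : ℕ) [NeZero n]
    (p : (Fin n → ℝ) × (Fin n → ℝ)) : ℝ :=
  (∑ s ∈ Finset.powersetCard 3 (Finset.univ : Finset (Fin n)), ∏ i ∈ s, p.2 i)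
    - ∑ i : Fin n, ∑ j : Fin n,
        if j ≠ i ∧ j ≠ i - 1 then p.2 i * p.1 j else 0

open Finset

namespace Multiset

variable {R : Type*}

theorem esymm_cons_succ [CommSemiring R] (a : R) (s : Multiset R) (k : ℕ) :
    (a ::ₘ s).esymm (k + 1) = s.esymm (k + 1) + a * s.esymm k := by
  simp [esymm, powersetCard_cons, sum_map_mul_left]

theorem esymm_one [CommSemiring R] (s : Multiset R) : s.esymm 1 = s.sum := by
  simp [esymm, powersetCard_one]

theorem two_mul_esymm_two [CommRing R] (s : Multiset R) :
    2 * s.esymm 2 = s.sum ^ 2 - (s.map (· ^ 2)).sum := by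
  induction s using Multiset.induction with
  | empty => simp [esymm, powersetCard_zero_right]
  | cons a s ih =>
    rw [esymm_cons_succ, esymm_one, sum_cons, map_cons, sum_cons]
    linear_combination ih

end Multiset

namespace Finset

variable {ι R : Type*}

theorem esymm_map_val_eq_erase [DecidableEq ι] [CommSemiring R] {s : Finset ι} {k : ι}
    (hk : k ∈ s) (f : ι → R) (j : ℕ) :
    (s.val.map f).esymm (j + 1) =
      ((s.erase k).val.map f).esymm (j + 1) + f k * ((s.erase k).val.map f).esymm j := by
  conv_lhs => rw [← Multiset.cons_erase (show k ∈ s.val from hk)]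
  rw [Multiset.map_cons, Multiset.esymm_cons_succ, erase_val]

theorem esymm_map_val_add_single [DecidableEq ι] [CommSemiring R] {s : Finset ι} {k : ι}
    (hk : k ∈ s) (f : ι → R) (t : R) (j : ℕ) :
    (s.val.map (f + Pi.single k t)).esymm (j + 1) =
      (s.val.map f).esymm (j + 1) + t * ((s.erase k).val.map f).esymm j := by
  have hoff : (s.erase k).val.map (f + Pi.single k t) = (s.erase k).val.map f :=
    Multiset.map_congr rfl fun i hi => by
      simp [ne_of_mem_erase (show i ∈ s.erase k from hi)]
  rw [esymm_map_val_eq_erase hk, esymm_map_val_eq_erase hk f, hoff]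
  simp only [Pi.add_apply, Pi.single_eq_same]
  ring

theorem two_mul_esymm_map_val_two [CommRing R] (s : Finset ι) (f : ι → R) :
    2 * (s.val.map f).esymm 2 = (∑ i ∈ s, f i) ^ 2 - ∑ i ∈ s, f i ^ 2 := by
  rw [Multiset.two_mul_esymm_two, Multiset.map_map, sum_eq_multiset_sum, sum_eq_multiset_sum]
  rfl

theorem sum_ite_ne_and_ne [DecidableEq ι] [Fintype ι] {M : Type*} [AddCommGroup M]
    (f : ι → M) {a b : ι} (hab : a ≠ b) :
    ∑ j, (if j ≠ a ∧ j ≠ b then f j else 0) = ∑ j, f j - (f a + f b) := by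
  rw [← sum_filter, eq_sub_iff_add_eq, ← sum_pair hab, ← sum_filter_add_sum_filter_not univ
    (fun j => j ≠ a ∧ j ≠ b)]
  congr 2
  ext j
  simp only [mem_filter, mem_univ, true_and, mem_insert, mem_singleton]
  tauto

end Finset

theorem ContinuousLinearMap.eq_zero_iff_forall_pi_single {ι R M : Type*} [Fintype ι]
    [DecidableEq ι] [Semiring R] [TopologicalSpace R] [AddCommMonoid M] [Module R M]
    [TopologicalSpace M] (L : (ι → R) × (ι → R) →L[R] M) :
    L = 0 ↔ ∀ k, L (Pi.single k 1, 0) = 0 ∧ L (0, Pi.single k 1) = 0 := by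
  refine ⟨by rintro rfl; simp, fun h => ?_⟩
  refine coe_injective (LinearMap.prod_ext (LinearMap.pi_ext fun k x => ?_)
    (LinearMap.pi_ext fun k x => ?_))
  · have hx : ((Pi.single k x : ι → R), (0 : ι → R)) = x • (Pi.single k 1, 0) := by
      simp [← Pi.single_smul']
    change L (Pi.single k x, 0) = 0
    rw [hx, map_smul, (h k).1, smul_zero]
  · have hx : ((0 : ι → R), (Pi.single k x : ι → R)) = x • (0, Pi.single k 1) := by
      simp [← Pi.single_smul']
    change L (0, Pi.single k x) = 0
    rw [hx, map_smul, (h k).2, smul_zero]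

theorem fderiv_apply_eq_of_add_smul {E : Type*} [NormedAddCommGroup E] [NormedSpace ℝ E]
    {f : E → ℝ} {p v : E} {c : ℝ} (hf : DifferentiableAt ℝ f p)
    (h : ∀ t : ℝ, f (p + t • v) = f p + t * c) : fderiv ℝ f p v = c := by
  rw [← hf.lineDeriv_eq_fderiv, lineDeriv]
  simp [h]

theorem Nat.eq_ite_mod_two_of_add_succ_eq {M : Type*} [AddCommGroup M] {g : ℕ → M}
    {c : M} (h : ∀ m, g m + g (m + 1) = c) (m : ℕ) :
    g m = if m % 2 = 0 then g 0 else g 1 := by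
  induction m with
  | zero => simp
  | succ m ih =>
    have hstep : g (m + 1) = g 0 + g 1 - g m := by rw [h 0, ← h m]; abel
    rcases Nat.mod_two_eq_zero_or_one m with hm | hm
    · rw [hstep, ih, if_pos hm, if_neg (by omega)]; abel
    · rw [hstep, ih, if_neg (by omega), if_pos (by omega)]; abel

namespace Fin

variable {n : ℕ} [NeZero n]

theorem two_nsmul_sum_of_add_add_one_eq {M : Type*} [AddCommMonoid M] {f : Fin n → M} {c : M}
    (h : ∀ k, f k + f (k + 1) = c) : 2 • ∑ i, f i = n • c := by
  calc 2 • ∑ i, f i = ∑ i, f i + ∑ i, f (i + 1) := by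
        rw [two_nsmul, Fintype.sum_equiv (Equiv.addRight 1) (fun i => f (i + 1)) f fun _ => rfl]
    _ = n • c := by simp [← sum_add_distrib, h]

theorem sum_eq_zero_of_forall_add_add_one_eq_sum {M : Type*} [AddCommGroup M]
    [NoZeroSMulDivisors ℕ M] (hn : 3 ≤ n) {f : Fin n → M}
    (h : ∀ k, f k + f (k + 1) = ∑ i, f i) : ∑ i, f i = 0 := by
  have h2 := two_nsmul_sum_of_add_add_one_eq h
  have hsplit : n • ∑ i, f i = (n - 2) • ∑ i, f i + 2 • ∑ i, f i := by
    rw [← add_nsmul, Nat.sub_add_cancel (by omega)]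
  rw [hsplit, eq_comm, add_eq_right, smul_eq_zero] at h2
  exact h2.resolve_left (by omega)

open Fin.NatCast in
theorem eq_ite_mod_two_of_add_add_one_eq {M : Type*} [AddCommGroup M] {f : Fin n → M} {c : M}
    (h : ∀ k, f k + f (k + 1) = c) (i : Fin n) :
    f i = if i.val % 2 = 0 then f 0 else f 1 := by
  have key := Nat.eq_ite_mod_two_of_add_succ_eq (g := fun m : ℕ => f m) (c := c)
    (fun m => by simpa using h m) i.val
  simpa using key

theorem val_add_one_mod_two (heven : Even n) (k : Fin n) :
    (k + 1).val % 2 = (k.val + 1) % 2 := by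
  have h2 : 2 ∣ n := heven.two_dvd
  rw [val_add, Nat.mod_mod_of_dvd _ h2, Nat.add_mod, val_one', Nat.mod_mod_of_dvd _ h2,
    ← Nat.add_mod]

theorem ite_mod_two_add_ite_mod_two_add_one {M : Type*} [AddCommMagma M] (heven : Even n)
    (a b : M) (k : Fin n) :
    (if k.val % 2 = 0 then a else b) + (if (k + 1).val % 2 = 0 then a else b) = a + b := by
  rw [val_add_one_mod_two heven]
  rcases Nat.mod_two_eq_zero_or_one k.val with hk | hk
  · rw [if_pos hk, if_neg (by omega)]
  · rw [if_neg (by omega), if_pos (by omega), add_comm]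

end Fin

section Toda

variable {n : ℕ} [NeZero n]

theorem differentiable_todaPeriodicI3 : Differentiable ℝ (todaPeriodicI3 n) := by
  refine Differentiable.sub (by fun_prop)
    (Differentiable.fun_sum fun i _ => Differentiable.fun_sum fun j _ => ?_)
  split_ifs <;> fun_prop

theorem todaPeriodicI3_apply (hn : 2 ≤ n) (X u : Fin n → ℝ) :
    todaPeriodicI3 n (X, u) = (univ.val.map u).esymm 3 - (∑ i, u i) * ∑ j, X j
      + ∑ i, u i * (X i + X (i - 1)) := by
  have hrow (i : Fin n) : ∑ j, (if j ≠ i ∧ j ≠ i - 1 then u i * X j else 0)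
      = u i * (∑ j, X j - (X i + X (i - 1))) := by
    have hne : i ≠ i - 1 := fun h => by
      have := Fin.one_eq_zero_iff.1 (sub_eq_self.1 h.symm)
      omega
    rw [← sum_ite_ne_and_ne X hne, mul_sum]
    exact sum_congr rfl fun j _ => by rw [mul_ite, mul_zero]
  rw [todaPeriodicI3, ← esymm_map_val, sum_congr rfl fun i _ => hrow i, sum_mul]
  simp only [mul_sub, sum_sub_distrib]
  ring

noncomputable def todaPeriodicI3PartialX (u : Fin n → ℝ) (k : Fin n) : ℝ :=
  -(∑ i, u i - u k - u (k + 1))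

noncomputable def todaPeriodicI3PartialU (X u : Fin n → ℝ) (k : Fin n) : ℝ :=
  (univ.val.map u).esymm 2 - u k * (∑ i, u i - u k) - (∑ j, X j - X (k - 1) - X k)

theorem todaPeriodicI3_add_smul_inl (hn : 2 ≤ n) (X u : Fin n → ℝ) (k : Fin n) (t : ℝ) :
    todaPeriodicI3 n ((X, u) + t • (Pi.single k 1, 0))
      = todaPeriodicI3 n (X, u) + t * todaPeriodicI3PartialX u k := by
  simp only [todaPeriodicI3PartialX, Prod.smul_mk, Prod.mk_add_mk, smul_zero, add_zero,
    todaPeriodicI3_apply hn]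
  simp only [Pi.add_apply, Pi.smul_apply, Pi.single_apply, smul_eq_mul, mul_ite, mul_one,
    mul_zero, mul_add, sum_add_distrib, sum_ite_eq', mem_univ, if_true, sub_eq_iff_eq_add]
  ring

theorem todaPeriodicI3_add_smul_inr (hn : 2 ≤ n) (X u : Fin n → ℝ) (k : Fin n) (t : ℝ) :
    todaPeriodicI3 n ((X, u) + t • (0, Pi.single k 1))
      = todaPeriodicI3 n (X, u) + t * todaPeriodicI3PartialU X u k := by
  have he3 : (univ.val.map (u + Pi.single k t)).esymm 3
      = (univ.val.map u).esymm 3 + t * ((univ.erase k).val.map u).esymm 2 :=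
    esymm_map_val_add_single (mem_univ k) u t 2
  have he2 : (univ.val.map u).esymm 2
      = ((univ.erase k).val.map u).esymm 2 + u k * (∑ i, u i - u k) := by
    rw [← sum_erase_eq_sub (mem_univ k), sum_eq_multiset_sum, ← Multiset.esymm_one]
    exact esymm_map_val_eq_erase (mem_univ k) u 1
  simp only [todaPeriodicI3PartialU, Prod.smul_mk, Prod.mk_add_mk, smul_zero, add_zero,
    todaPeriodicI3_apply hn, ← Pi.single_smul', smul_eq_mul, mul_one, he3]
  simp only [Pi.add_apply, Pi.single_apply, add_mul, sum_add_distrib, ite_mul, zero_mul,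
    sum_ite_eq', mem_univ, if_true]
  linear_combination (-t) * he2

theorem fderiv_todaPeriodicI3_apply_inl (hn : 2 ≤ n) (X u : Fin n → ℝ) (k : Fin n) :
    fderiv ℝ (todaPeriodicI3 n) (X, u) (Pi.single k 1, 0) = todaPeriodicI3PartialX u k :=
  fderiv_apply_eq_of_add_smul differentiable_todaPeriodicI3.differentiableAt
    (todaPeriodicI3_add_smul_inl hn X u k)

theorem fderiv_todaPeriodicI3_apply_inr (hn : 2 ≤ n) (X u : Fin n → ℝ) (k : Fin n) :
    fderiv ℝ (todaPeriodicI3 n) (X, u) (0, Pi.single k 1) = todaPeriodicI3PartialU X u k :=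
  fderiv_apply_eq_of_add_smul differentiable_todaPeriodicI3.differentiableAt
    (todaPeriodicI3_add_smul_inr hn X u k)

theorem exists_alternating_of_todaPeriodicI3Partial_eq_zero (hn : 3 ≤ n) {X u : Fin n → ℝ}
    (h : ∀ k, todaPeriodicI3PartialX u k = 0 ∧ todaPeriodicI3PartialU X u k = 0) :
    ∃ X₁ X₂ u₁ u₂ : ℝ, u₁ + u₂ = 0 ∧ X₁ + X₂ = u₁ * u₂ ∧
      (∀ i : Fin n, X i = if i.val % 2 = 0 then X₁ else X₂) ∧
      (∀ i : Fin n, u i = if i.val % 2 = 0 then u₁ else u₂) := by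
  simp only [todaPeriodicI3PartialX, todaPeriodicI3PartialU] at h
  have hu_adj (k : Fin n) : u k + u (k + 1) = ∑ i, u i := by linarith [(h k).1]
  have hU : ∑ i, u i = 0 := Fin.sum_eq_zero_of_forall_add_add_one_eq_sum hn hu_adj
  have hu_alt := Fin.eq_ite_mod_two_of_add_add_one_eq hu_adj
  have hu1 : u 1 = -u 0 := by
    have h0 := hu_adj 0
    rw [zero_add, hU] at h0
    linarith
  have hsq (k : Fin n) : u k ^ 2 = u 0 ^ 2 := by
    rw [hu_alt k]
    split_ifs
    · rfl
    · rw [hu1, neg_sq]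
  have hV : 2 * (univ.val.map u).esymm 2 = -(n * u 0 ^ 2) := by
    rw [two_mul_esymm_map_val_two, hU, sum_congr rfl fun k _ => hsq k]
    simp
  have hX_adj (k : Fin n) :
      X k + X (k + 1) = ∑ j, X j - (univ.val.map u).esymm 2 - u 0 ^ 2 := by
    have hk := (h (k + 1)).2
    rw [add_sub_cancel_right, hU] at hk
    linear_combination hk - hsq (k + 1)
  have hY := Fin.two_nsmul_sum_of_add_add_one_eq hX_adj
  rw [nsmul_eq_mul, nsmul_eq_mul, Nat.cast_ofNat] at hY
  have hc : ((n : ℝ) - 2) * (X 0 + X 1 + u 0 ^ 2) = 0 := by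
    have h0 := hX_adj 0
    rw [zero_add] at h0
    linear_combination ((n : ℝ) - 2) * h0 - hY + hV
  have hn2 : (n : ℝ) - 2 ≠ 0 := by
    have : (3 : ℝ) ≤ n := by exact_mod_cast hn
    linarith
  refine ⟨X 0, X 1, u 0, u 1, by linarith, ?_, Fin.eq_ite_mod_two_of_add_add_one_eq hX_adj,
    hu_alt⟩
  rw [hu1]
  linear_combination (mul_eq_zero.1 hc).resolve_left hn2

theorem todaPeriodicI3Partial_eq_zero_of_alternating (heven : Even n) {X u : Fin n → ℝ}
    {X₁ X₂ u₁ u₂ : ℝ} (hu₁₂ : u₁ + u₂ = 0) (hX₁₂ : X₁ + X₂ = u₁ * u₂)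
    (hX : ∀ i : Fin n, X i = if i.val % 2 = 0 then X₁ else X₂)
    (hu : ∀ i : Fin n, u i = if i.val % 2 = 0 then u₁ else u₂) (k : Fin n) :
    todaPeriodicI3PartialX u k = 0 ∧ todaPeriodicI3PartialU X u k = 0 := by
  obtain rfl : u₂ = -u₁ := by linear_combination hu₁₂
  have hu_adj (k : Fin n) : u k + u (k + 1) = 0 := by
    rw [hu, hu, Fin.ite_mod_two_add_ite_mod_two_add_one heven, hu₁₂]
  have hX_adj (k : Fin n) : X k + X (k + 1) = X₁ + X₂ := by
    rw [hX, hX, Fin.ite_mod_two_add_ite_mod_two_add_one heven]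
  have hU : ∑ i, u i = 0 := by
    simpa using Fin.two_nsmul_sum_of_add_add_one_eq hu_adj
  have hY := Fin.two_nsmul_sum_of_add_add_one_eq hX_adj
  rw [nsmul_eq_mul, nsmul_eq_mul, Nat.cast_ofNat] at hY
  have hsq (k : Fin n) : u k ^ 2 = u₁ ^ 2 := by
    rw [hu k]
    split_ifs
    · rfl
    · rw [neg_sq]
  have hV : 2 * (univ.val.map u).esymm 2 = -(n * u₁ ^ 2) := by
    rw [two_mul_esymm_map_val_two, hU, sum_congr rfl fun k _ => hsq k]
    simp
  have hX_pred := hX_adj (k - 1)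
  rw [sub_add_cancel] at hX_pred
  simp only [todaPeriodicI3PartialX, todaPeriodicI3PartialU, hU]
  constructor
  · linear_combination hu_adj k
  · linear_combination (hV - hY) / 2 + hX_pred + hsq k + (1 - (n : ℝ) / 2) * hX₁₂

end Toda

/-- Indices are numbered from `0`, so `i.val % 2 = 0` marks the odd positions `1, 3, …` of the
1-indexed formulation. -/
theorem todaPeriodic_I3_gradient_zero_iff_even
    (n : ℕ) [NeZero n] (hn : 4 ≤ n) (heven : Even n) (X u : Fin n → ℝ) :
    fderiv ℝ (todaPeriodicI3 n) (X, u) = 0 ↔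
      ∃ X₁ X₂ u₁ u₂ : ℝ, u₁ + u₂ = 0 ∧ X₁ + X₂ = u₁ * u₂ ∧
        (∀ i : Fin n, X i = if i.val % 2 = 0 then X₁ else X₂) ∧
        (∀ i : Fin n, u i = if i.val % 2 = 0 then u₁ else u₂) := by
  have h2 : 2 ≤ n := by omega
  rw [ContinuousLinearMap.eq_zero_iff_forall_pi_single]
  simp only [fderiv_todaPeriodicI3_apply_inl h2, fderiv_todaPeriodicI3_apply_inr h2]
  constructor
  · exact exists_alternating_of_todaPeriodicI3Partial_eq_zero (by omega)
  · rintro ⟨X₁, X₂, u₁, u₂, hu₁₂, hX₁₂, hX, hu⟩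
    exact todaPeriodicI3Partial_eq_zero_of_alternating heven hu₁₂ hX₁₂ hX hu
end

section
/- Let n ≥ 4 be even. On ℝ²ⁿ with coordinates (X₁,...,Xₙ,u₁,...,uₙ) define I₁ = Σᵢ uᵢ, I₂ = Σ_{i<j} uᵢuⱼ − Σⱼ Xⱼ, and I₃ = Σ_{i₁<i₂<i₃} u_{i₁}u_{i₂}u_{i₃} − Σ_{1 ≤ i,j ≤ n, j ≢ i (mod n), j ≢ i−1 (mod n)} u_i X_j (X₀ := Xₙ), and let 𝕀₁₂₃ = (I₁,I₂,I₃) : ℝ²ⁿ → ℝ³. Then rank ∇𝕀₁₂₃(X,u) ≤ 2 if and only if there exist X₁, X₂, u₁, u₂ ∈ ℝ such that X_i = X₁ for all odd i, X_i = X₂ for all even i, u_i = u₁ for all odd i, and u_i = u₂ for all even i (with X₁, X₂, u₁, u₂ arbitrary). -/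
/-- The conserved quantity `I₁` of the periodic Toda lattice. -/
noncomputable def todaPeriodicI1 (n : ℕ) (p : (Fin n → ℝ) × (Fin n → ℝ)) : ℝ :=
  ∑ i : Fin n, p.2 i

/-- The conserved quantity `I₂` of the periodic Toda lattice. -/
noncomputable def todaPeriodicI2 (n : ℕ) (p : (Fin n → ℝ) × (Fin n → ℝ)) : ℝ :=
  (∑ s ∈ Finset.powersetCard 2 (Finset.univ : Finset (Fin n)), ∏ i ∈ s, p.2 i)
    - ∑ j : Fin n, p.1 j

/-- The vectorial conserved quantity `𝕀₁₂₃ = (I₁, I₂, I₃)`. -/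
noncomputable def todaPeriodicI123 (n : ℕ) [NeZero n]
    (p : (Fin n → ℝ) × (Fin n → ℝ)) : ℝ × ℝ × ℝ :=
  (todaPeriodicI1 n p, todaPeriodicI2 n p, todaPeriodicI3 n p)

/-!
The columns of the Jacobian are `∂𝕀₁₂₃/∂X_j = (0, -1, -(U - u_j - u_{j+1}))` and
`∂𝕀₁₂₃/∂u_k = (1, U - u_k, V - u_k (U - u_k) - (Y - X_k - X_{k-1}))`, so the rank is at most `2`
exactly when a nonzero `(a, b, c)` annihilates all of them. The `X`-columns force `c ≠ 0` and then
`u_{j+2} = u_j`; modulo the `X`-relations, two consecutive `u`-relations differ by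
`c (X_{k+2} - X_k)`. Conversely, on an alternating configuration `u_j + u_{j+1}` and
`X_k + X_{k-1}` are constant and every `u_k` is a root of `(x - u₁)(x - u₂)`, which is exactly
what makes the `u`-relations independent of `k`; this needs `n` even, so that parity is well
defined around the cycle.
-/

open Finset Module

section ElementarySymmetric

variable {ι : Type*} [DecidableEq ι]

theorem sum_powersetCard_succ_insert_prod {R : Type*} [CommSemiring R] {S : Finset ι} {k : ι}
    (hk : k ∉ S) (m : ℕ) (u : ι → R) :
    ∑ t ∈ (insert k S).powersetCard (m + 1), ∏ i ∈ t, u i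
      = ∑ t ∈ S.powersetCard (m + 1), ∏ i ∈ t, u i
        + u k * ∑ t ∈ S.powersetCard m, ∏ i ∈ t, u i := by
  have hkt : ∀ t ∈ S.powersetCard m, k ∉ t := fun t ht hkt => hk ((mem_powersetCard.1 ht).1 hkt)
  rw [powersetCard_succ_insert hk, sum_union, sum_image, mul_sum]
  · exact congrArg _ (sum_congr rfl fun t ht => prod_insert (hkt t ht))
  · intro t₁ h₁ t₂ h₂ h
    rw [← erase_insert (hkt t₁ h₁), ← erase_insert (hkt t₂ h₂), h]
  · refine disjoint_left.2 fun t ht ht' => ?_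
    obtain ⟨t', -, rfl⟩ := mem_image.1 ht'
    exact hk ((mem_powersetCard.1 ht).1 (mem_insert_self k t'))

theorem sum_powersetCard_succ_erase_prod {R : Type*} [CommRing R] {S : Finset ι} {k : ι}
    (hk : k ∈ S) (m : ℕ) (u : ι → R) :
    ∑ t ∈ (S.erase k).powersetCard (m + 1), ∏ i ∈ t, u i
      = ∑ t ∈ S.powersetCard (m + 1), ∏ i ∈ t, u i
        - u k * ∑ t ∈ (S.erase k).powersetCard m, ∏ i ∈ t, u i := by
  rw [← insert_erase hk, sum_powersetCard_succ_insert_prod (notMem_erase k S),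
    erase_insert_eq_erase, erase_idem]
  ring

theorem sum_filter_mem_powersetCard_succ {β : Type*} [AddCommMonoid β] {S : Finset ι} {k : ι}
    (hk : k ∈ S) (m : ℕ) (f : Finset ι → β) :
    ∑ s ∈ S.powersetCard (m + 1) with k ∈ s, f (s.erase k)
      = ∑ t ∈ (S.erase k).powersetCard m, f t := by
  refine sum_nbij' (·.erase k) (insert k) ?_ ?_ ?_ ?_ fun _ _ => rfl
  · intro s hs
    simp only [mem_filter, mem_powersetCard] at hs ⊢
    exact ⟨erase_subset_erase k hs.1.1, by rw [card_erase_of_mem hs.2, hs.1.2]; rfl⟩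
  · intro t ht
    simp only [mem_powersetCard] at ht
    have hkt : k ∉ t := fun h => notMem_erase k S (ht.1 h)
    simp only [mem_filter, mem_powersetCard]
    exact ⟨⟨insert_subset hk (ht.1.trans (erase_subset k S)),
      by rw [card_insert_of_notMem hkt, ht.2]⟩, mem_insert_self k t⟩
  · intro s hs
    exact insert_erase (mem_filter.1 hs).2
  · intro t ht
    exact erase_insert fun h => notMem_erase k S ((mem_powersetCard.1 ht).1 h)

variable [Fintype ι] {𝕜 : Type*} [NontriviallyNormedField 𝕜]

theorem hasFDerivAt_sum_powersetCard_prod (m : ℕ) (u : ι → 𝕜) :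
    HasFDerivAt (fun v : ι → 𝕜 => ∑ s ∈ univ.powersetCard (m + 1), ∏ i ∈ s, v i)
      (∑ k, (∑ t ∈ (univ.erase k).powersetCard m, ∏ i ∈ t, u i) •
        (ContinuousLinearMap.proj k : (ι → 𝕜) →L[𝕜] 𝕜)) u := by
  have hprod (s : Finset ι) : HasFDerivAt (fun v : ι → 𝕜 => ∏ i ∈ s, v i)
      (∑ i ∈ s, (∏ j ∈ s.erase i, u j) • (ContinuousLinearMap.proj i : (ι → 𝕜) →L[𝕜] 𝕜)) u :=
    HasFDerivAt.finsetProd fun i _ => hasFDerivAt_apply i u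
  refine (HasFDerivAt.fun_sum fun s (_ : s ∈ univ.powersetCard (m + 1)) => hprod s).congr_fderiv
    ?_
  rw [sum_comm' (t' := univ) (s' := fun k => (univ.powersetCard (m + 1)).filter (k ∈ ·))
    (fun s k => by simp)]
  refine sum_congr rfl fun k _ => ?_
  rw [← sum_smul, sum_filter_mem_powersetCard_succ (mem_univ k) m fun t => ∏ i ∈ t, u i]

end ElementarySymmetric

theorem finrank_range_le_two_iff {K E : Type*} [Field K] [AddCommGroup E] [Module K E]
    (L : E →ₗ[K] K × K × K) :
    finrank K (LinearMap.range L) ≤ 2 ↔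
      ∃ a b c : K, (a, b, c) ≠ 0 ∧ ∀ v, a * (L v).1 + b * (L v).2.1 + c * (L v).2.2 = 0 := by
  have hrange : finrank K (LinearMap.range L) ≤ 2 ↔ LinearMap.range L ≠ ⊤ := by
    have h3 : finrank K (K × K × K) = 3 := by simp
    refine ⟨fun h htop => ?_, fun h => ?_⟩
    · rw [htop, finrank_top, h3] at h
      omega
    · have := Submodule.finrank_lt h
      omega
  rw [hrange]
  constructor
  · intro hne
    obtain ⟨φ, hφ, hmap⟩ := Submodule.exists_dual_map_eq_bot_of_lt_top hne.lt_top inferInstance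
    have hφ_apply (w : K × K × K) :
        φ w = φ (1, 0, 0) * w.1 + φ (0, 1, 0) * w.2.1 + φ (0, 0, 1) * w.2.2 := by
      conv_lhs => rw [show w = w.1 • (1, 0, 0) + w.2.1 • (0, 1, 0) + w.2.2 • (0, 0, 1) by
        ext <;> simp]
      simp only [map_add, map_smul, smul_eq_mul, mul_comm]
    refine ⟨φ (1, 0, 0), φ (0, 1, 0), φ (0, 0, 1), fun h0 => hφ ?_, fun v => ?_⟩
    · simp only [Prod.mk_eq_zero] at h0
      refine LinearMap.ext fun w => ?_
      rw [hφ_apply, h0.1, h0.2.1, h0.2.2]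
      simp
    · rw [← hφ_apply]
      exact (Submodule.eq_bot_iff _).1 hmap _
        (Submodule.mem_map_of_mem (LinearMap.mem_range_self L v))
  · rintro ⟨a, b, c, habc, h⟩ htop
    have key (w : K × K × K) : a * w.1 + b * w.2.1 + c * w.2.2 = 0 := by
      obtain ⟨v, rfl⟩ : w ∈ LinearMap.range L := htop ▸ Submodule.mem_top
      exact h v
    have := key (1, 0, 0)
    have := key (0, 1, 0)
    have := key (0, 0, 1)
    simp_all

section Alternating

variable {n : ℕ} [NeZero n]

theorem Fin.val_add_one_mod_two_of_even (heven : Even n) (i : Fin n) :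
    ((i + 1 : Fin n) : ℕ) % 2 = ((i : ℕ) + 1) % 2 := by
  have h2 : 2 ∣ n := even_iff_two_dvd.1 heven
  rw [Fin.val_add, Nat.mod_mod_of_dvd _ h2, Nat.add_mod, Fin.val_one', Nat.mod_mod_of_dvd _ h2,
    ← Nat.add_mod]

theorem add_apply_add_one_of_eq_ite {R : Type*} [AddCommMagma R] (heven : Even n) {f : Fin n → R}
    {a b : R} (hf : ∀ i, f i = if (i : ℕ) % 2 = 0 then a else b) (i : Fin n) :
    f i + f (i + 1) = a + b := by
  rw [hf, hf, Fin.val_add_one_mod_two_of_even heven]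
  rcases Nat.mod_two_eq_zero_or_one i with h | h
  · rw [if_pos h, if_neg (by omega)]
  · rw [if_neg (by omega), if_pos (by omega), add_comm]

open Fin.NatCast in
theorem exists_eq_ite_of_add_two {α : Type*} {f : Fin n → α} (hf : ∀ i, f (i + 1 + 1) = f i) :
    ∃ a b, ∀ i : Fin n, f i = if (i : ℕ) % 2 = 0 then a else b := by
  have hcast (k : ℕ) : f k = if k % 2 = 0 then f 0 else f 1 := by
    induction k using Nat.twoStepInduction with
    | zero => simp
    | one => simp
    | more k ih _ =>
      rw [Nat.cast_add, Nat.cast_two, ← one_add_one_eq_two, ← add_assoc, hf, ih, Nat.add_mod_right]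
  exact ⟨f 0, f 1, fun i => by simpa using hcast i⟩

end Alternating

section Toda

variable {n : ℕ} [NeZero n]

theorem todaPeriodicI3_eq (hn : 1 < n) (p : (Fin n → ℝ) × (Fin n → ℝ)) :
    todaPeriodicI3 n p = ∑ s ∈ powersetCard 3 (univ : Finset (Fin n)), ∏ i ∈ s, p.2 i
      - ∑ i, p.2 i * (∑ j, p.1 j - p.1 i - p.1 (i - 1)) := by
  have hne (i : Fin n) : i - 1 ≠ i :=
    sub_eq_self.not.2 (Fin.ne_of_val_ne (by simp [Nat.mod_eq_of_lt hn]))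
  unfold todaPeriodicI3
  congr 1
  refine sum_congr rfl fun i _ => ?_
  have hfilter :
      {j ∈ (univ : Finset (Fin n)) | j ≠ i ∧ j ≠ i - 1} = (univ.erase i).erase (i - 1) := by
    ext j
    simp [and_comm]
  rw [← sum_filter, hfilter, ← mul_sum, sum_erase_eq_sub (mem_erase.2 ⟨hne i, mem_univ _⟩),
    sum_erase_eq_sub (mem_univ i)]

theorem fderiv_todaPeriodicI123_apply (hn : 1 < n) (X u : Fin n → ℝ)
    (v : (Fin n → ℝ) × (Fin n → ℝ)) :
    fderiv ℝ (todaPeriodicI123 n) (X, u) v =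
      (∑ k, v.2 k,
       ∑ k, (∑ i, u i - u k) * v.2 k - ∑ j, v.1 j,
       ∑ k, (∑ s ∈ powersetCard 2 (univ : Finset (Fin n)), ∏ i ∈ s, u i - u k * (∑ i, u i - u k)
           - (∑ j, X j - X k - X (k - 1))) * v.2 k
         - ∑ j, (∑ i, u i - u j - u (j + 1)) * v.1 j) := by
  have hX (j : Fin n) := hasFDerivAt_pi'.1 (hasFDerivAt_fst (𝕜 := ℝ) (p := (X, u))) j
  have hu (j : Fin n) := hasFDerivAt_pi'.1 (hasFDerivAt_snd (𝕜 := ℝ) (p := (X, u))) j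
  have he (m : ℕ) :=
    (hasFDerivAt_sum_powersetCard_prod m u).comp (X, u) (hasFDerivAt_snd (𝕜 := ℝ) (p := (X, u)))
  have hI1 : HasFDerivAt (todaPeriodicI1 n) _ (X, u) :=
    HasFDerivAt.fun_sum fun i (_ : i ∈ univ) => hu i
  have hI2 : HasFDerivAt (todaPeriodicI2 n) _ (X, u) :=
    (he 1).sub (HasFDerivAt.fun_sum fun i (_ : i ∈ univ) => hX i)
  have hsumX := HasFDerivAt.fun_sum fun j (_ : j ∈ (univ : Finset (Fin n))) => hX j
  have hI3 := ((he 2).sub (HasFDerivAt.fun_sum fun i (_ : i ∈ (univ : Finset (Fin n))) =>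
      (hu i).mul ((hsumX.sub (hX i)).sub (hX (i - 1))))).congr_of_eventuallyEq
    (.of_forall (todaPeriodicI3_eq hn))
  rw [HasFDerivAt.fderiv (f := todaPeriodicI123 n) (hI1.prodMk (hI2.prodMk hI3))]
  have he1_erase (k : Fin n) :
      ∑ t ∈ powersetCard 1 (univ.erase k), ∏ i ∈ t, u i = ∑ i, u i - u k := by
    simp [powersetCard_one]
  have hshift : ∑ i, u i * v.1 (i - 1) = ∑ j, u (j + 1) * v.1 j := by
    simpa using (Equiv.subRight (1 : Fin n)).sum_comp fun j => u (j + 1) * v.1 j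
  simp only [Pi.sub_apply, ContinuousLinearMap.prod_apply, _root_.sum_apply,
    ContinuousLinearMap.comp_apply, ContinuousLinearMap.coe_snd', ContinuousLinearMap.coe_fst',
    ContinuousLinearMap.proj_apply, sub_apply, add_apply, smul_apply, smul_eq_mul, Prod.mk.injEq,
    sub_left_inj, true_and]
  refine ⟨sum_congr rfl fun k _ => by rw [he1_erase], ?_⟩
  simp only [sum_powersetCard_succ_erase_prod (mem_univ _) 1, he1_erase, mul_sub, sub_mul,
    sum_sub_distrib, sum_add_distrib, ← sum_mul, ← mul_sum, hshift]
  ring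

/-- `(a, b, c)` annihilates every column `∂𝕀₁₂₃/∂X_j`, `∂𝕀₁₂₃/∂u_k` of the Jacobian, where `U`, `V`,
`Y` stand for `∑ u`, `∑_{i<j} uᵢuⱼ` and `∑ X`. -/
def IsTodaAnnihilator (U V Y : ℝ) (X u : Fin n → ℝ) (a b c : ℝ) : Prop :=
  (∀ j, b + c * (U - u j - u (j + 1)) = 0) ∧
    ∀ k, a + b * (U - u k) + c * (V - u k * (U - u k) - (Y - X k - X (k - 1))) = 0

theorem fderiv_todaPeriodicI123_annihilated_iff (hn : 1 < n) (X u : Fin n → ℝ) (a b c : ℝ) :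
    (∀ v, a * (fderiv ℝ (todaPeriodicI123 n) (X, u) v).1
        + b * (fderiv ℝ (todaPeriodicI123 n) (X, u) v).2.1
        + c * (fderiv ℝ (todaPeriodicI123 n) (X, u) v).2.2 = 0) ↔
      IsTodaAnnihilator (∑ i, u i) (∑ s ∈ powersetCard 2 (univ : Finset (Fin n)), ∏ i ∈ s, u i)
        (∑ j, X j) X u a b c := by
  simp_rw [fderiv_todaPeriodicI123_apply hn]
  constructor
  · intro h
    refine ⟨fun j => ?_, fun k => ?_⟩
    · have hj := h (Pi.single j 1, 0)
      simp only [Pi.zero_apply, sum_const_zero, mul_zero, Pi.single_apply, sum_ite_eq', mem_univ,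
        ↓reduceIte, zero_sub, mul_neg, mul_one, zero_add, mul_ite, neg_sub] at hj
      linear_combination -hj
    · simpa [Pi.single_apply] using h (0, Pi.single k 1)
  · rintro ⟨hX, hu⟩ v
    calc _ = ∑ k, (a + b * (∑ i, u i - u k) + c * (∑ s ∈ powersetCard 2 (univ : Finset (Fin n)),
              ∏ i ∈ s, u i - u k * (∑ i, u i - u k) - (∑ j, X j - X k - X (k - 1)))) * v.2 k
          - ∑ j, (b + c * (∑ i, u i - u j - u (j + 1))) * v.1 j := by
          simp only [add_mul, sum_add_distrib, mul_assoc, ← mul_sum]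
          ring
      _ = 0 := by simp [hX, hu]

theorem IsTodaAnnihilator.add_two_eq {U V Y a b c : ℝ} {X u : Fin n → ℝ}
    (h : IsTodaAnnihilator U V Y X u a b c) (habc : (a, b, c) ≠ 0) :
    (∀ i, X (i + 1 + 1) = X i) ∧ ∀ i, u (i + 1 + 1) = u i := by
  obtain ⟨hX, hu⟩ := h
  have hc : c ≠ 0 := by
    rintro rfl
    have hb : b = 0 := by simpa using hX 0
    have ha : a = 0 := by simpa [hb] using hu 0
    exact habc (by simp [ha, hb])
  refine ⟨fun i => mul_left_cancel₀ hc ?_, fun i => mul_left_cancel₀ hc ?_⟩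
  · have hu₁ := hu (i + 1)
    have hu₂ := hu (i + 1 + 1)
    rw [add_sub_cancel_right] at hu₁ hu₂
    linear_combination hu₂ - hu₁ - (u (i + 1) - u (i + 1 + 1)) * hX (i + 1)
  · linear_combination hX i - hX (i + 1)

theorem isTodaAnnihilator_of_eq_ite (heven : Even n) {X u : Fin n → ℝ} {X₁ X₂ u₁ u₂ : ℝ}
    (hX : ∀ i, X i = if (i : ℕ) % 2 = 0 then X₁ else X₂)
    (hu : ∀ i, u i = if (i : ℕ) % 2 = 0 then u₁ else u₂) (U V Y : ℝ) :
    IsTodaAnnihilator U V Y X u (U ^ 2 - (u₁ + u₂) * U + u₁ * u₂ - V + Y - (X₁ + X₂))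
      (u₁ + u₂ - U) 1 := by
  refine ⟨fun j => ?_, fun k => ?_⟩
  · linear_combination -add_apply_add_one_of_eq_ite heven hu j
  · have hroot : (u k - u₁) * (u k - u₂) = 0 := by
      rw [hu k]
      split_ifs <;> ring
    have hXsum := add_apply_add_one_of_eq_ite heven hX (k - 1)
    rw [sub_add_cancel] at hXsum
    linear_combination hroot + hXsum

end Toda

theorem todaPeriodic_I123_rank_le_two_iff_even_general
    (n : ℕ) [NeZero n] (heven : Even n) (X u : Fin n → ℝ) :
    Module.finrank ℝ (LinearMap.range (fderiv ℝ (todaPeriodicI123 n) (X, u) : (Fin n → ℝ) × (Fin n → ℝ) →ₗ[ℝ] ℝ × ℝ × ℝ)) ≤ 2 ↔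
      ∃ X₁ X₂ u₁ u₂ : ℝ,
        (∀ i : Fin n, X i = if i.val % 2 = 0 then X₁ else X₂) ∧
        (∀ i : Fin n, u i = if i.val % 2 = 0 then u₁ else u₂) := by
  have hn : 1 < n := by
    obtain ⟨m, rfl⟩ := heven
    have := NeZero.ne (m + m)
    omega
  simp only [finrank_range_le_two_iff, ContinuousLinearMap.coe_coe,
    fderiv_todaPeriodicI123_annihilated_iff hn]
  constructor
  · rintro ⟨a, b, c, habc, h⟩
    obtain ⟨hX, hu⟩ := h.add_two_eq habc
    obtain ⟨X₁, X₂, hX⟩ := exists_eq_ite_of_add_two hX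
    obtain ⟨u₁, u₂, hu⟩ := exists_eq_ite_of_add_two hu
    exact ⟨X₁, X₂, u₁, u₂, hX, hu⟩
  · rintro ⟨X₁, X₂, u₁, u₂, hX, hu⟩
    exact ⟨_, _, 1, by simp, isTodaAnnihilator_of_eq_ite heven hX hu _ _ _⟩

/-- For the periodic Toda lattice with an even number `n ≥ 4` of particles, the
Jacobian of `𝕀₁₂₃ = (I₁, I₂, I₃)` has rank at most `2` exactly at the
alternating configurations `(X₁,X₂,…,X₁,X₂,u₁,u₂,…,u₁,u₂)`. -/
theorem todaPeriodic_I123_rank_le_two_iff_even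
    (n : ℕ) [NeZero n] (hn : 4 ≤ n) (heven : Even n) (X u : Fin n → ℝ) :
    Module.finrank ℝ (LinearMap.range (fderiv ℝ (todaPeriodicI123 n) (X, u) : (Fin n → ℝ) × (Fin n → ℝ) →ₗ[ℝ] ℝ × ℝ × ℝ)) ≤ 2 ↔
      ∃ X₁ X₂ u₁ u₂ : ℝ,
        (∀ i : Fin n, X i = if i.val % 2 = 0 then X₁ else X₂) ∧
        (∀ i : Fin n, u i = if i.val % 2 = 0 then u₁ else u₂) :=
  todaPeriodic_I123_rank_le_two_iff_even_general n heven X u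
end
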